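/- Let R be a finite commutative ring with identity, T = Tr(R), u a unit of R, and n a nonzero zero-divisor of R. Let A be the matrix with a11 = u, a12 = n, a21 = 0, a22 = 0. Then N(A) consists exactly of the matrices [[a, u⁻¹(a−c)n],[0,c]] with a,c ∈ R, excluding scalar matrices and A itself, and |N(A)| = |R|^2 − |R| − 1. -/

import Mathlib

open Matrix

/-- The ring of 2×2 upper triangular matrices over `R`. -/
def Tri (R : Type*) [CommRing R] : Subring (Matrix (Fin 2) (Fin 2) R) where
  carrier := {A | A 1 0 = 0}
  mul_mem' := by
    intro a b ha hb
    simp only [Set.mem_setOf_eq] at *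
    simp [Matrix.mul_apply, Fin.sum_univ_two, ha, hb]
  one_mem' := by simp [Matrix.one_apply]
  add_mem' := by
    intro a b ha hb
    simp_all [Matrix.add_apply]
  zero_mem' := by simp
  neg_mem' := by
    intro a ha
    simp_all

/-- The commuting graph of a ring `T`: vertices are the noncentral elements,
two distinct vertices are adjacent iff they commute. -/
def commGraph (T : Type*) [Ring T] : SimpleGraph {x : T // x ∉ Set.center T} where
  Adj a b := a ≠ b ∧ (a : T) * b = b * a
  symm := by
    constructor
    rintro a b ⟨h1, h2⟩
    exact ⟨h1.symm, h2.symm⟩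
  loopless := by constructor; rintro a ⟨h, _⟩; exact h rfl

/-!
An upper triangular `B = [[a, b], [0, c]]` commutes with an upper triangular `A` iff
`A₀₁ (a - c) = b (A₀₀ - A₁₁)`. For `A = [[u, n], [0, 0]]` this solves to
`b = u⁻¹ (a - c) n`, so the centralizer of `A` is parametrized injectively by the diagonal
`(a, c) ∈ R × R`. Removing the scalar matrices (`a = c`) and `A` itself (`(a, c) = (u, 0)`)
leaves `|R|² - |R| - 1` matrices.
-/

namespace Tri

variable {R : Type*} [CommRing R]

def mk (a b c : R) : Tri R := ⟨!![a, b; 0, c], rfl⟩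

@[simp]
lemma coe_mk (a b c : R) : (mk a b c).1 = !![a, b; 0, c] := rfl

lemma eq_mk (B : Tri R) : B = mk (B.1 0 0) (B.1 0 1) (B.1 1 1) := by
  have h10 : B.1 1 0 = 0 := B.2
  ext i j
  fin_cases i <;> fin_cases j <;> simp [h10]

lemma mk_inj {a b c a' b' c' : R} : mk a b c = mk a' b' c' ↔ a = a' ∧ b = b' ∧ c = c' := by
  refine ⟨fun h => ?_, by rintro ⟨rfl, rfl, rfl⟩; rfl⟩
  have h' := congrArg Subtype.val h
  exact ⟨congrFun (congrFun h' 0) 0, congrFun (congrFun h' 0) 1, congrFun (congrFun h' 1) 1⟩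

lemma mk_mul_mk (a b c a' b' c' : R) :
    mk a b c * mk a' b' c' = mk (a * a') (a * b' + b * c') (c * c') := by
  ext i j
  fin_cases i <;> fin_cases j <;> simp [Matrix.mul_apply, Fin.sum_univ_two]

lemma mul_comm_iff (A B : Tri R) :
    A * B = B * A ↔ A.1 0 1 * (B.1 0 0 - B.1 1 1) = B.1 0 1 * (A.1 0 0 - A.1 1 1) := by
  rw [eq_mk A, eq_mk B]
  simp only [mk_mul_mk, mk_inj, coe_mk, of_apply, cons_val', cons_val_zero, cons_val_one,
    empty_val', cons_val_fin_one, mul_comm (A.1 0 0), mul_comm (A.1 1 1), true_and, and_true]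
  constructor <;> intro h <;> linear_combination -h

lemma mem_center_iff (B : Tri R) :
    B ∈ Set.center (Tri R) ↔ B.1 0 1 = 0 ∧ B.1 0 0 = B.1 1 1 := by
  rw [Semigroup.mem_center_iff]
  refine ⟨fun h => ⟨?_, ?_⟩, fun ⟨h01, hdiag⟩ A => ?_⟩
  · simpa using ((mul_comm_iff (mk 1 0 0) B).mp (h _)).symm
  · simpa [sub_eq_zero] using (mul_comm_iff (mk 0 1 0) B).mp (h _)
  · simp [mul_comm_iff, h01, hdiag]

lemma mem_center_iff_exists_smul_one (B : Tri R) :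
    B ∈ Set.center (Tri R) ↔ ∃ x : R, B.1 = x • (1 : Matrix (Fin 2) (Fin 2) R) := by
  rw [mem_center_iff]
  constructor
  · rintro ⟨h01, hdiag⟩
    refine ⟨B.1 1 1, ?_⟩
    rw [eq_mk B, h01, hdiag]
    ext i j
    fin_cases i <;> fin_cases j <;> simp
  · rintro ⟨x, hx⟩
    simp [hx]

lemma mul_comm_iff_of_coe_eq (u : Rˣ) (n : R) {A : Tri R} (hA : A.1 = !![(u : R), n; 0, 0])
    (B : Tri R) :
    A * B = B * A ↔ ∃ a c : R, B.1 = !![a, (↑u⁻¹ : R) * (a - c) * n; 0, c] := by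
  have solve (a b c : R) : b = ↑u⁻¹ * (a - c) * n ↔ n * (a - c) = b * u := by
    rw [mul_assoc, Units.eq_inv_mul_iff_mul_eq]
    constructor <;> intro h <;> linear_combination -h
  rw [mul_comm_iff, hA]
  simp only [of_apply, cons_val', cons_val_zero, cons_val_one, empty_val', cons_val_fin_one,
    sub_zero]
  constructor
  · intro h
    refine ⟨B.1 0 0, B.1 1 1, ?_⟩
    rw [← (solve _ _ _).mpr h]
    exact congrArg Subtype.val (eq_mk B)
  · rintro ⟨a, c, hB⟩
    simpa [hB] using (solve a _ c).mp rfl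

lemma neighbourhood_eq_image (u : Rˣ) (n : R) {A : Tri R} (hA : A.1 = !![(u : R), n; 0, 0]) :
    {B : Tri R | A * B = B * A ∧ B ≠ A ∧ B ∉ Set.center (Tri R)} =
      (fun p : R × R => mk p.1 (↑u⁻¹ * (p.1 - p.2) * n) p.2) ''
        ((Set.univ : Set R).offDiag \ {((u : R), 0)}) := by
  have hA_mk : A = mk (u : R) (↑u⁻¹ * ((u : R) - 0) * n) 0 := Subtype.ext (by simp [hA])
  ext B
  simp only [Set.mem_ofPred_eq, mul_comm_iff_of_coe_eq u n hA, Set.mem_image, Set.mem_sdiff,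
    Set.mem_offDiag, Set.mem_univ, true_and, Set.mem_singleton_iff, Prod.exists, Prod.mk.injEq]
  constructor
  · rintro ⟨⟨a, c, hB⟩, hBA, hBz⟩
    obtain rfl : B = mk a (↑u⁻¹ * (a - c) * n) c := Subtype.ext hB
    refine ⟨a, c, ⟨fun hac => hBz ?_, fun ⟨ha, hc⟩ => hBA ?_⟩, rfl⟩
    · simp [mem_center_iff, hac]
    · rw [hA_mk, ha, hc]
  · rintro ⟨a, c, ⟨hac, hne⟩, rfl⟩
    refine ⟨⟨a, c, rfl⟩, fun h => hne ?_, fun h => hac ?_⟩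
    · rw [hA_mk, mk_inj] at h
      exact ⟨h.1, h.2.2⟩
    · exact ((mem_center_iff _).mp h).2

end Tri

lemma Set.ncard_univ_offDiag (α : Type*) [Finite α] :
    (Set.univ : Set α).offDiag.ncard = Nat.card α ^ 2 - Nat.card α := by
  classical
  cases nonempty_fintype α
  rw [← Finset.coe_univ, ← Finset.coe_offDiag, Set.ncard_coe_finset, Finset.offDiag_card,
    Finset.card_univ, Nat.card_eq_fintype_card, sq]

theorem neighbourhood_A7_general {R : Type*} [CommRing R] [Fintype R] (u : Rˣ) (n : R)
    (hn : n ≠ 0) (A : Tri R)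
    (hA : (A : Matrix (Fin 2) (Fin 2) R) = !![(u : R), n; 0, 0]) :
    {B : Tri R | A * B = B * A ∧ B ≠ A ∧ B ∉ Set.center (Tri R)} =
      {B : Tri R | (∃ a c : R,
          (B : Matrix (Fin 2) (Fin 2) R) = !![a, (↑u⁻¹ : R) * (a - c) * n; 0, c]) ∧
        (¬ ∃ x : R, (B : Matrix (Fin 2) (Fin 2) R) = x • (1 : Matrix (Fin 2) (Fin 2) R)) ∧
        B ≠ A} ∧
    Nat.card {B : Tri R | A * B = B * A ∧ B ≠ A ∧ B ∉ Set.center (Tri R)} =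
      Nat.card R ^ 2 - Nat.card R - 1 := by
  refine ⟨?_, ?_⟩
  · ext B
    simp only [Set.mem_ofPred_eq, Tri.mul_comm_iff_of_coe_eq u n hA,
      Tri.mem_center_iff_exists_smul_one]
    tauto
  · have : Nontrivial R := nontrivial_of_ne n 0 hn
    have hu : ((u : R), (0 : R)) ∈ (Set.univ : Set R).offDiag := by simp
    have hinj : Function.Injective fun p : R × R => Tri.mk p.1 (↑u⁻¹ * (p.1 - p.2) * n) p.2 :=
      fun p q h => Prod.ext (Tri.mk_inj.mp h).1 (Tri.mk_inj.mp h).2.2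
    rw [Nat.card_coe_set_eq, Tri.neighbourhood_eq_image u n hA,
      Set.ncard_image_of_injective _ hinj, Set.ncard_sdiff_singleton_of_mem hu,
      Set.ncard_univ_offDiag]

/-- Theorem 2.2(vii): for `A = [[u,n],[0,0]]` with `u` a unit and `n` a nonzero
zero-divisor, the neighbourhood of `A` consists exactly of the matrices
`[[a, u⁻¹(a-c)n],[0,c]]`, excluding scalar matrices and `A` itself, and it has
`|R|^2 - |R| - 1` elements. -/
theorem neighbourhood_A7 {R : Type*} [CommRing R] [Fintype R] (u : Rˣ) (n : R)
    (hn : n ≠ 0) (hzd : ∃ s : R, s ≠ 0 ∧ s * n = 0) (A : Tri R)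
    (hA : (A : Matrix (Fin 2) (Fin 2) R) = !![(u : R), n; 0, 0]) :
    {B : Tri R | A * B = B * A ∧ B ≠ A ∧ B ∉ Set.center (Tri R)} =
      {B : Tri R | (∃ a c : R,
          (B : Matrix (Fin 2) (Fin 2) R) = !![a, (↑u⁻¹ : R) * (a - c) * n; 0, c]) ∧
        (¬ ∃ x : R, (B : Matrix (Fin 2) (Fin 2) R) = x • (1 : Matrix (Fin 2) (Fin 2) R)) ∧
        B ≠ A} ∧
    Nat.card {B : Tri R | A * B = B * A ∧ B ≠ A ∧ B ∉ Set.center (Tri R)} =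
      Nat.card R ^ 2 - Nat.card R - 1 :=
  neighbourhood_A7_general u n hn A hA
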